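/- Let A₁, A₂, A₃ be nonnegative n×n real matrices. Then ‖A₁^{(1/3)} ∘ A₂^{(1/3)} ∘ A₃^{(1/3)}‖ ≤ ρ((A₁ᵀA₂A₃ᵀA₁A₂ᵀA₃)^{(1/3)} ∘ (A₂ᵀA₃A₁ᵀA₂A₃ᵀA₁)^{(1/3)} ∘ (A₃ᵀA₁A₂ᵀA₃A₁ᵀA₂)^{(1/3)})^{1/6} ≤ ρ(A₁A₂ᵀA₃A₁ᵀA₂A₃ᵀ)^{1/6}. -/

import Mathlib

open Matrix

/-- Spectral radius of a real matrix: max modulus of its (complex) eigenvalues. -/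
noncomputable def specRad {N : Type*} [Fintype N] [DecidableEq N] (A : Matrix N N ℝ) : ℝ :=
  (spectralRadius ℂ (A.map Complex.ofReal)).toReal

/-- Operator norm induced by the Euclidean (ℓ²) norm. -/
noncomputable def l2OpNorm {N : Type*} [Fintype N] [DecidableEq N] (A : Matrix N N ℝ) : ℝ :=
  ‖Matrix.toEuclideanCLM (𝕜 := ℝ) A‖

/-- Entrywise α-th power (with the convention 0^0 = 1, as for `Real.rpow`). -/
noncomputable def hadPow {N : Type*} (A : Matrix N N ℝ) (α : ℝ) : Matrix N N ℝ :=
  fun i j => A i j ^ α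

/-!
Write `G(X, Y, Z) = X^{(1/3)} ∘ Y^{(1/3)} ∘ Z^{(1/3)}` and order real matrices entrywise.
Hölder's inequality for three sequences gives `G(X, Y, Z) G(X', Y', Z') ≤ G(XX', YY', ZZ')` for
nonnegative matrices. With `B = G(A₁, A₂, A₃)` and its rotations `G(A₂, A₃, A₁) = B`, this bounds
`(BᵀB)³` entrywise by `G(M₁, M₂, M₃)`, where the `Mᵢ` are the three cyclic products of the
statement. Since `BᵀB` is symmetric, `‖B‖⁶ = ‖BᵀB‖³ ≤ ρ(BᵀB)³ ≤ ρ((BᵀB)³)`, and the spectral radius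
is monotone on nonnegative matrices (Gelfand's formula with the `ℓ^∞` operator norm), which gives
the first inequality. For the second, Gelfand's formula together with `G(X, Y, Z)ᵏ ≤ G(Xᵏ, Yᵏ, Zᵏ)`
and the row-wise Hölder bound `‖G(X, Y, Z)‖_∞ ≤ ‖X‖_∞^{1/3} ‖Y‖_∞^{1/3} ‖Z‖_∞^{1/3}` give
`ρ(G(M₁, M₂, M₃)) ≤ (ρ(M₁) ρ(M₂) ρ(M₃))^{1/3}`, and all `ρ(Mᵢ)` equal `ρ(A₁A₂ᵀA₃A₁ᵀA₂A₃ᵀ)` because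
`ρ(XY) = ρ(YX)`.
-/

open Filter Topology Finset
open scoped NNReal ENNReal

theorem Real.sum_rpow_third_mul_le {ι : Type*} (s : Finset ι) {f g h : ι → ℝ}
    (hf : ∀ i ∈ s, 0 ≤ f i) (hg : ∀ i ∈ s, 0 ≤ g i) (hh : ∀ i ∈ s, 0 ≤ h i) :
    ∑ i ∈ s, f i ^ (1 / 3 : ℝ) * g i ^ (1 / 3 : ℝ) * h i ^ (1 / 3 : ℝ) ≤
      (∑ i ∈ s, f i) ^ (1 / 3 : ℝ) * (∑ i ∈ s, g i) ^ (1 / 3 : ℝ) *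
        (∑ i ∈ s, h i) ^ (1 / 3 : ℝ) := by
  have hgh : ∀ i ∈ s, 0 ≤ g i * h i := fun i hi => mul_nonneg (hg i hi) (hh i hi)
  have hG : 0 ≤ ∑ i ∈ s, g i := sum_nonneg hg
  have hH : 0 ≤ ∑ i ∈ s, h i := sum_nonneg hh
  have cauchy_schwarz : ∑ i ∈ s, (g i * h i) ^ (1 / 2 : ℝ) ≤
      (∑ i ∈ s, g i) ^ (1 / 2 : ℝ) * (∑ i ∈ s, h i) ^ (1 / 2 : ℝ) := by
    simpa using Real.Lr_rpow_le_Lp_mul_Lq_of_nonneg s (p := 1) (q := 1) (r := 1 / 2)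
      ⟨by norm_num, one_pos, one_pos⟩ hg hh
  have holder : ∑ i ∈ s, (f i * (g i * h i)) ^ (1 / 3 : ℝ) ≤
      (∑ i ∈ s, f i) ^ (1 / 3 : ℝ) * (∑ i ∈ s, (g i * h i) ^ (1 / 2 : ℝ)) ^ (2 / 3 : ℝ) := by
    convert Real.Lr_rpow_le_Lp_mul_Lq_of_nonneg s (p := 1) (q := 1 / 2) (r := 1 / 3)
      ⟨by norm_num, one_pos, by norm_num⟩ hf hgh using 3 <;> norm_num
  calc ∑ i ∈ s, f i ^ (1 / 3 : ℝ) * g i ^ (1 / 3 : ℝ) * h i ^ (1 / 3 : ℝ)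
      = ∑ i ∈ s, (f i * (g i * h i)) ^ (1 / 3 : ℝ) := sum_congr rfl fun i hi => by
        rw [Real.mul_rpow (hf i hi) (hgh i hi), Real.mul_rpow (hg i hi) (hh i hi), mul_assoc]
    _ ≤ (∑ i ∈ s, f i) ^ (1 / 3 : ℝ) *
        ((∑ i ∈ s, g i) ^ (1 / 2 : ℝ) * (∑ i ∈ s, h i) ^ (1 / 2 : ℝ)) ^ (2 / 3 : ℝ) := by
      refine holder.trans ?_
      gcongr
      · exact Real.rpow_nonneg (sum_nonneg hf) _
      · exact sum_nonneg fun i hi => Real.rpow_nonneg (hgh i hi) _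
    _ = _ := by
      rw [Real.mul_rpow (by positivity) (by positivity), ← Real.rpow_mul hG, ← Real.rpow_mul hH,
        mul_assoc]
      norm_num

theorem spectralRadius_mul_comm {𝕜 A : Type*} [NormedField 𝕜] [Ring A] [Algebra 𝕜 A] (a b : A) :
    spectralRadius 𝕜 (a * b) = spectralRadius 𝕜 (b * a) := by
  have sup_nonzero (c : A) :
      spectralRadius 𝕜 c = ⨆ k ∈ spectrum 𝕜 c \ {0}, (‖k‖₊ : ℝ≥0∞) := by
    refine le_antisymm (iSup₂_le fun k hk => ?_) (biSup_mono fun k hk => hk.1)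
    rcases eq_or_ne k 0 with rfl | hk0
    · simp
    · exact le_iSup₂_of_le k ⟨hk, hk0⟩ le_rfl
  rw [sup_nonzero, sup_nonzero, spectrum.nonzero_mul_comm]

namespace Matrix

variable {n : Type*}

theorem map_mem_spectrum_map [Fintype n] [DecidableEq n] {K L : Type*} [Field K] [Field L]
    (f : K →+* L) {A : Matrix n n K} {r : K} (hr : r ∈ spectrum K A) :
    f r ∈ spectrum L (A.map f) := by
  rw [mem_spectrum_iff_isRoot_charpoly] at hr ⊢
  rw [charpoly_map]
  exact hr.map

theorem map_ofReal_mul [Fintype n] (A B : Matrix n n ℝ) :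
    (A * B).map Complex.ofReal = A.map Complex.ofReal * B.map Complex.ofReal :=
  Matrix.map_mul (f := Complex.ofRealHom)

theorem map_ofReal_pow [Fintype n] [DecidableEq n] (M : Matrix n n ℝ) (k : ℕ) :
    (M ^ k).map Complex.ofReal = M.map Complex.ofReal ^ k :=
  map_pow Complex.ofRealHom.mapMatrix M k

/-- The entrywise order (Mathlib's `Matrix.instPartialOrder` is the Loewner order). -/
abbrev entrywisePartialOrder {m : Type*} : PartialOrder (Matrix m n ℝ) :=
  inferInstanceAs (PartialOrder (m → n → ℝ))

attribute [local instance] entrywisePartialOrder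

theorem transpose_nonneg {m : Type*} {A : Matrix m n ℝ} (hA : 0 ≤ A) : 0 ≤ Aᵀ :=
  fun i j => hA j i

theorem zeroLEOneClass_entrywise [DecidableEq n] : ZeroLEOneClass (Matrix n n ℝ) :=
  ⟨fun i j => by by_cases h : i = j <;> simp [one_apply, h]⟩

theorem posMulMono_entrywise [Fintype n] : PosMulMono (Matrix n n ℝ) :=
  ⟨fun _ hA _ _ h i j => sum_le_sum fun k _ => mul_le_mul_of_nonneg_left (h k j) (hA i k)⟩

theorem mulPosMono_entrywise [Fintype n] : MulPosMono (Matrix n n ℝ) :=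
  ⟨fun _ hC _ _ h i j => sum_le_sum fun k _ => mul_le_mul_of_nonneg_right (h i k) (hC k j)⟩

attribute [local instance] zeroLEOneClass_entrywise posMulMono_entrywise mulPosMono_entrywise

noncomputable def hadamardGeomMean (X Y Z : Matrix n n ℝ) : Matrix n n ℝ :=
  hadPow X (1 / 3) ⊙ hadPow Y (1 / 3) ⊙ hadPow Z (1 / 3)

theorem hadamardGeomMean_apply (X Y Z : Matrix n n ℝ) (i j : n) :
    hadamardGeomMean X Y Z i j = X i j ^ (1 / 3 : ℝ) * Y i j ^ (1 / 3 : ℝ) * Z i j ^ (1 / 3 : ℝ) :=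
  rfl

theorem hadamardGeomMean_nonneg {X Y Z : Matrix n n ℝ} (hX : 0 ≤ X) (hY : 0 ≤ Y) (hZ : 0 ≤ Z) :
    0 ≤ hadamardGeomMean X Y Z := fun i j =>
  mul_nonneg (mul_nonneg (Real.rpow_nonneg (hX i j) _) (Real.rpow_nonneg (hY i j) _))
    (Real.rpow_nonneg (hZ i j) _)

theorem hadamardGeomMean_rotate (X Y Z : Matrix n n ℝ) :
    hadamardGeomMean X Y Z = hadamardGeomMean Y Z X := by
  ext i j
  simp only [hadamardGeomMean_apply]
  ring

theorem transpose_hadamardGeomMean (X Y Z : Matrix n n ℝ) :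
    (hadamardGeomMean X Y Z)ᵀ = hadamardGeomMean Xᵀ Yᵀ Zᵀ :=
  rfl

theorem hadamardGeomMean_one [DecidableEq n] : hadamardGeomMean (1 : Matrix n n ℝ) 1 1 = 1 := by
  ext i j
  by_cases h : i = j <;> simp [hadamardGeomMean_apply, one_apply, h]

section Products

variable [Fintype n]

theorem hadamardGeomMean_mul_le {X Y Z X' Y' Z' : Matrix n n ℝ} (hX : 0 ≤ X) (hY : 0 ≤ Y)
    (hZ : 0 ≤ Z) (hX' : 0 ≤ X') (hY' : 0 ≤ Y') (hZ' : 0 ≤ Z') :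
    hadamardGeomMean X Y Z * hadamardGeomMean X' Y' Z' ≤
      hadamardGeomMean (X * X') (Y * Y') (Z * Z') := fun i j => by
  simp only [mul_apply, hadamardGeomMean_apply]
  refine le_of_eq_of_le (sum_congr rfl fun k _ => ?_) (Real.sum_rpow_third_mul_le univ
    (f := fun k => X i k * X' k j) (g := fun k => Y i k * Y' k j) (h := fun k => Z i k * Z' k j)
    (fun k _ => mul_nonneg (hX i k) (hX' k j)) (fun k _ => mul_nonneg (hY i k) (hY' k j))
    (fun k _ => mul_nonneg (hZ i k) (hZ' k j)))
  rw [Real.mul_rpow (hX i k) (hX' k j), Real.mul_rpow (hY i k) (hY' k j),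
    Real.mul_rpow (hZ i k) (hZ' k j)]
  ring

theorem transpose_mul_self_hadamardGeomMean_le {A₁ A₂ A₃ : Matrix n n ℝ} (h₁ : 0 ≤ A₁)
    (h₂ : 0 ≤ A₂) (h₃ : 0 ≤ A₃) :
    (hadamardGeomMean A₁ A₂ A₃)ᵀ * hadamardGeomMean A₁ A₂ A₃ ≤
      hadamardGeomMean (A₁ᵀ * A₂) (A₂ᵀ * A₃) (A₃ᵀ * A₁) := by
  conv_lhs => rw [transpose_hadamardGeomMean]; arg 2; rw [hadamardGeomMean_rotate]
  exact hadamardGeomMean_mul_le (transpose_nonneg h₁) (transpose_nonneg h₂) (transpose_nonneg h₃)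
    h₂ h₃ h₁

theorem hadamardGeomMean_pow_le [DecidableEq n] {X Y Z : Matrix n n ℝ} (hX : 0 ≤ X) (hY : 0 ≤ Y)
    (hZ : 0 ≤ Z) (k : ℕ) :
    hadamardGeomMean X Y Z ^ k ≤ hadamardGeomMean (X ^ k) (Y ^ k) (Z ^ k) := by
  induction k with
  | zero => simp [hadamardGeomMean_one]
  | succ k ih =>
    simp only [pow_succ]
    calc hadamardGeomMean X Y Z ^ k * hadamardGeomMean X Y Z
        ≤ hadamardGeomMean (X ^ k) (Y ^ k) (Z ^ k) * hadamardGeomMean X Y Z :=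
          mul_le_mul_of_nonneg_right ih (hadamardGeomMean_nonneg hX hY hZ)
      _ ≤ _ :=
          hadamardGeomMean_mul_le (pow_nonneg hX k) (pow_nonneg hY k) (pow_nonneg hZ k) hX hY hZ

theorem pow_three_transpose_mul_self_hadamardGeomMean_le [DecidableEq n]
    {A₁ A₂ A₃ : Matrix n n ℝ} (h₁ : 0 ≤ A₁) (h₂ : 0 ≤ A₂) (h₃ : 0 ≤ A₃) :
    ((hadamardGeomMean A₁ A₂ A₃)ᵀ * hadamardGeomMean A₁ A₂ A₃) ^ 3 ≤
      hadamardGeomMean (A₁ᵀ * A₂ * A₃ᵀ * A₁ * A₂ᵀ * A₃) (A₂ᵀ * A₃ * A₁ᵀ * A₂ * A₃ᵀ * A₁)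
        (A₃ᵀ * A₁ * A₂ᵀ * A₃ * A₁ᵀ * A₂) := by
  set B := hadamardGeomMean A₁ A₂ A₃ with hB
  have hP₁ : 0 ≤ A₁ᵀ * A₂ := mul_nonneg (transpose_nonneg h₁) h₂
  have hP₂ : 0 ≤ A₂ᵀ * A₃ := mul_nonneg (transpose_nonneg h₂) h₃
  have hP₃ : 0 ≤ A₃ᵀ * A₁ := mul_nonneg (transpose_nonneg h₃) h₁
  have hBB : 0 ≤ Bᵀ * B := by
    have := hadamardGeomMean_nonneg h₁ h₂ h₃
    exact mul_nonneg (transpose_nonneg this) this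
  have hB₁ : Bᵀ * B ≤ hadamardGeomMean (A₁ᵀ * A₂) (A₂ᵀ * A₃) (A₃ᵀ * A₁) :=
    transpose_mul_self_hadamardGeomMean_le h₁ h₂ h₃
  have hB₂ : Bᵀ * B ≤ hadamardGeomMean (A₂ᵀ * A₃) (A₃ᵀ * A₁) (A₁ᵀ * A₂) := by
    rw [hB, hadamardGeomMean_rotate A₁]
    exact transpose_mul_self_hadamardGeomMean_le h₂ h₃ h₁
  have hB₃ : Bᵀ * B ≤ hadamardGeomMean (A₃ᵀ * A₁) (A₁ᵀ * A₂) (A₂ᵀ * A₃) := by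
    rw [hB, hadamardGeomMean_rotate A₁, hadamardGeomMean_rotate A₂]
    exact transpose_mul_self_hadamardGeomMean_le h₃ h₁ h₂
  calc (Bᵀ * B) ^ 3 = Bᵀ * B * (Bᵀ * B) * (Bᵀ * B) := pow_three' _
    _ ≤ hadamardGeomMean (A₁ᵀ * A₂) (A₂ᵀ * A₃) (A₃ᵀ * A₁) *
          hadamardGeomMean (A₃ᵀ * A₁) (A₁ᵀ * A₂) (A₂ᵀ * A₃) *
          hadamardGeomMean (A₂ᵀ * A₃) (A₃ᵀ * A₁) (A₁ᵀ * A₂) :=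
        mul_le_mul (mul_le_mul hB₁ hB₃ hBB (hadamardGeomMean_nonneg hP₁ hP₂ hP₃)) hB₂ hBB
          (mul_nonneg (hadamardGeomMean_nonneg hP₁ hP₂ hP₃) (hadamardGeomMean_nonneg hP₃ hP₁ hP₂))
    _ ≤ hadamardGeomMean (A₁ᵀ * A₂ * (A₃ᵀ * A₁)) (A₂ᵀ * A₃ * (A₁ᵀ * A₂))
            (A₃ᵀ * A₁ * (A₂ᵀ * A₃)) *
          hadamardGeomMean (A₂ᵀ * A₃) (A₃ᵀ * A₁) (A₁ᵀ * A₂) :=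
        mul_le_mul_of_nonneg_right (hadamardGeomMean_mul_le hP₁ hP₂ hP₃ hP₃ hP₁ hP₂)
          (hadamardGeomMean_nonneg hP₂ hP₃ hP₁)
    _ ≤ _ := by
        simpa only [mul_assoc] using hadamardGeomMean_mul_le (mul_nonneg hP₁ hP₃)
          (mul_nonneg hP₂ hP₁) (mul_nonneg hP₃ hP₂) hP₂ hP₃ hP₁

end Products

section LinftyNorm

attribute [local instance] Matrix.linftyOpNormedAddCommGroup Matrix.linftyOpNormedRing
  Matrix.linftyOpNormedAlgebra

variable [Fintype n]

theorem linfty_opNorm_le_iff_of_nonneg {m : Type*} [Fintype m] {A : Matrix m n ℝ} (hA : 0 ≤ A)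
    {r : ℝ} (hr : 0 ≤ r) : ‖A‖ ≤ r ↔ ∀ i, ∑ j, A i j ≤ r := by
  lift r to ℝ≥0 using hr
  rw [linfty_opNorm_def, NNReal.coe_le_coe, Finset.sup_le_iff]
  refine forall_congr' fun i => ?_
  simp only [mem_univ, true_imp_iff, ← NNReal.coe_le_coe, NNReal.coe_sum, coe_nnnorm,
    Real.norm_eq_abs]
  rw [sum_congr rfl fun j _ => abs_of_nonneg (hA i j)]

theorem linfty_opNorm_mono {A B : Matrix n n ℝ} (hA : 0 ≤ A) (hAB : A ≤ B) : ‖A‖ ≤ ‖B‖ := by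
  have hB : 0 ≤ B := hA.trans hAB
  rw [linfty_opNorm_le_iff_of_nonneg hA (norm_nonneg B)]
  intro i
  exact (sum_le_sum fun j _ => hAB i j).trans
    ((linfty_opNorm_le_iff_of_nonneg hB (norm_nonneg B)).1 le_rfl i)

theorem linfty_opNorm_hadamardGeomMean_le {X Y Z : Matrix n n ℝ} (hX : 0 ≤ X) (hY : 0 ≤ Y)
    (hZ : 0 ≤ Z) :
    ‖hadamardGeomMean X Y Z‖ ≤ ‖X‖ ^ (1 / 3 : ℝ) * ‖Y‖ ^ (1 / 3 : ℝ) * ‖Z‖ ^ (1 / 3 : ℝ) := by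
  have row_sum_le {W : Matrix n n ℝ} (hW : 0 ≤ W) (i : n) : ∑ j, W i j ≤ ‖W‖ :=
    (linfty_opNorm_le_iff_of_nonneg hW (norm_nonneg W)).1 le_rfl i
  rw [linfty_opNorm_le_iff_of_nonneg (hadamardGeomMean_nonneg hX hY hZ) (by positivity)]
  intro i
  refine (Real.sum_rpow_third_mul_le univ (fun j _ => hX i j) (fun j _ => hY i j)
    (fun j _ => hZ i j)).trans ?_
  have hXi : 0 ≤ ∑ j, X i j := sum_nonneg fun j _ => hX i j
  have hYi : 0 ≤ ∑ j, Y i j := sum_nonneg fun j _ => hY i j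
  have hZi : 0 ≤ ∑ j, Z i j := sum_nonneg fun j _ => hZ i j
  gcongr <;> exact row_sum_le ‹_› i

theorem linfty_opNorm_map_ofReal (M : Matrix n n ℝ) : ‖M.map Complex.ofReal‖ = ‖M‖ := by
  simp [linfty_opNorm_def, Matrix.map_apply]

variable [DecidableEq n]

theorem spectralRadius_ne_top (M : Matrix n n ℂ) : spectralRadius ℂ M ≠ ∞ := by
  refine ne_top_of_le_ne_top ?_ (spectrum.spectralRadius_le_pow_nnnorm_pow_one_div ℂ M 0)
  simp [ENNReal.mul_eq_top]

theorem tendsto_linfty_opNorm_pow_specRad (M : Matrix n n ℝ) :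
    Tendsto (fun k : ℕ => ‖M ^ k‖ ^ (1 / k : ℝ)) atTop (𝓝 (specRad M)) := by
  set MC := M.map Complex.ofReal
  refine ((ENNReal.tendsto_toReal (spectralRadius_ne_top MC)).comp
    (spectrum.pow_norm_pow_one_div_tendsto_nhds_spectralRadius MC)).congr fun k => ?_
  rw [Function.comp_apply, ← map_ofReal_pow, linfty_opNorm_map_ofReal,
    ENNReal.toReal_ofReal (by positivity)]

end LinftyNorm

end Matrix

section SpectralRadius

open Matrix

attribute [local instance] entrywisePartialOrder zeroLEOneClass_entrywise posMulMono_entrywise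
  mulPosMono_entrywise

variable {n : Type*} [Fintype n] [DecidableEq n]

theorem specRad_nonneg (M : Matrix n n ℝ) : 0 ≤ specRad M := ENNReal.toReal_nonneg

theorem specRad_mul_comm (A B : Matrix n n ℝ) : specRad (A * B) = specRad (B * A) := by
  unfold specRad
  rw [map_ofReal_mul, map_ofReal_mul, spectralRadius_mul_comm]

theorem specRad_pow_le (M : Matrix n n ℝ) {k : ℕ} (hk : k ≠ 0) :
    specRad M ^ k ≤ specRad (M ^ k) := by
  unfold specRad
  rw [← ENNReal.toReal_pow, map_ofReal_pow]
  exact ENNReal.toReal_mono (spectralRadius_ne_top _) (spectrum.spectralRadius_pow_le _ k hk)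

theorem l2OpNorm_nonneg (A : Matrix n n ℝ) : 0 ≤ l2OpNorm A := norm_nonneg _

theorem l2OpNorm_le_specRad_of_isSymm {P : Matrix n n ℝ} (hP : P.IsSymm) :
    l2OpNorm P ≤ specRad P := by
  set T := toEuclideanCLM (𝕜 := ℝ) P
  have hT : IsSelfAdjoint T := by
    rw [IsSelfAdjoint, ← map_star, star_eq_conjTranspose, conjTranspose_eq_transpose_of_trivial,
      hP.eq]
  have hnorm : spectralRadius ℝ P = ‖T‖₊ := by
    rw [← T.spectralRadius_eq_nnnorm hT, spectralRadius, spectralRadius, AlgEquiv.spectrum_eq]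
  have hreal_le : spectralRadius ℝ P ≤ spectralRadius ℂ (P.map Complex.ofReal) :=
    iSup₂_le fun r hr =>
      le_iSup₂_of_le (r : ℂ) (map_mem_spectrum_map Complex.ofRealHom hr) (by simp)
  calc l2OpNorm P = (spectralRadius ℝ P).toReal := by rw [hnorm]; rfl
    _ ≤ specRad P := ENNReal.toReal_mono (spectralRadius_ne_top _) hreal_le

theorem l2OpNorm_sq (B : Matrix n n ℝ) : l2OpNorm B ^ 2 = l2OpNorm (Bᵀ * B) := by
  set T := toEuclideanCLM (𝕜 := ℝ) B
  have h : toEuclideanCLM (𝕜 := ℝ) (Bᵀ * B) = star T * T := by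
    rw [map_mul, ← map_star, star_eq_conjTranspose, conjTranspose_eq_transpose_of_trivial]
  rw [l2OpNorm, l2OpNorm, h, sq, ContinuousLinearMap.mul_def, ContinuousLinearMap.star_eq_adjoint,
    T.norm_adjoint_comp_self]

section GelfandFormula

attribute [local instance] Matrix.linftyOpNormedAddCommGroup Matrix.linftyOpNormedRing
  Matrix.linftyOpNormedAlgebra

theorem specRad_mono {A B : Matrix n n ℝ} (hA : 0 ≤ A) (hAB : A ≤ B) : specRad A ≤ specRad B :=
  le_of_tendsto_of_tendsto' (tendsto_linfty_opNorm_pow_specRad A)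
    (tendsto_linfty_opNorm_pow_specRad B) fun k => Real.rpow_le_rpow (norm_nonneg _)
      (linfty_opNorm_mono (pow_nonneg hA k) (pow_le_pow_left₀ hA hAB k)) (by positivity)

theorem specRad_hadamardGeomMean_le {X Y Z : Matrix n n ℝ} (hX : 0 ≤ X) (hY : 0 ≤ Y)
    (hZ : 0 ≤ Z) :
    specRad (hadamardGeomMean X Y Z) ≤
      specRad X ^ (1 / 3 : ℝ) * specRad Y ^ (1 / 3 : ℝ) * specRad Z ^ (1 / 3 : ℝ) := by
  have cbrt (M : Matrix n n ℝ) := (tendsto_linfty_opNorm_pow_specRad M).rpow_const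
    (p := 1 / 3) (Or.inr (by norm_num))
  refine le_of_tendsto_of_tendsto' (tendsto_linfty_opNorm_pow_specRad _)
    (((cbrt X).mul (cbrt Y)).mul (cbrt Z)) fun k => ?_
  have swap (x : ℝ) (hx : 0 ≤ x) :
      (x ^ (1 / 3 : ℝ)) ^ (1 / k : ℝ) = (x ^ (1 / k : ℝ)) ^ (1 / 3 : ℝ) := by
    rw [← Real.rpow_mul hx, ← Real.rpow_mul hx, mul_comm]
  calc ‖hadamardGeomMean X Y Z ^ k‖ ^ (1 / k : ℝ)
      ≤ ‖hadamardGeomMean (X ^ k) (Y ^ k) (Z ^ k)‖ ^ (1 / k : ℝ) :=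
        Real.rpow_le_rpow (norm_nonneg _) (linfty_opNorm_mono
          (pow_nonneg (hadamardGeomMean_nonneg hX hY hZ) k) (hadamardGeomMean_pow_le hX hY hZ k))
          (by positivity)
    _ ≤ (‖X ^ k‖ ^ (1 / 3 : ℝ) * ‖Y ^ k‖ ^ (1 / 3 : ℝ) * ‖Z ^ k‖ ^ (1 / 3 : ℝ)) ^ (1 / k : ℝ) :=
        Real.rpow_le_rpow (norm_nonneg _) (linfty_opNorm_hadamardGeomMean_le
          (pow_nonneg hX k) (pow_nonneg hY k) (pow_nonneg hZ k)) (by positivity)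
    _ = _ := by
        rw [Real.mul_rpow (by positivity) (by positivity), Real.mul_rpow (by positivity)
          (by positivity), swap _ (norm_nonneg _), swap _ (norm_nonneg _), swap _ (norm_nonneg _)]

end GelfandFormula

section CyclicProducts

variable {A₁ A₂ A₃ : Matrix n n ℝ}

theorem l2OpNorm_hadamardGeomMean_pow_six_le (h₁ : 0 ≤ A₁) (h₂ : 0 ≤ A₂) (h₃ : 0 ≤ A₃) :
    l2OpNorm (hadamardGeomMean A₁ A₂ A₃) ^ 6 ≤
      specRad (hadamardGeomMean (A₁ᵀ * A₂ * A₃ᵀ * A₁ * A₂ᵀ * A₃)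
        (A₂ᵀ * A₃ * A₁ᵀ * A₂ * A₃ᵀ * A₁) (A₃ᵀ * A₁ * A₂ᵀ * A₃ * A₁ᵀ * A₂)) := by
  set B := hadamardGeomMean A₁ A₂ A₃
  have hB : 0 ≤ B := hadamardGeomMean_nonneg h₁ h₂ h₃
  calc l2OpNorm B ^ 6 = l2OpNorm (Bᵀ * B) ^ 3 := by rw [← l2OpNorm_sq, ← pow_mul]
    _ ≤ specRad (Bᵀ * B) ^ 3 := pow_le_pow_left₀ (l2OpNorm_nonneg _)
        (l2OpNorm_le_specRad_of_isSymm (isSymm_transpose_mul_self B)) 3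
    _ ≤ specRad ((Bᵀ * B) ^ 3) := specRad_pow_le _ three_ne_zero
    _ ≤ _ := specRad_mono (pow_nonneg (mul_nonneg (transpose_nonneg hB) hB) 3)
        (pow_three_transpose_mul_self_hadamardGeomMean_le h₁ h₂ h₃)

theorem specRad_hadamardGeomMean_cyclic_le (h₁ : 0 ≤ A₁) (h₂ : 0 ≤ A₂) (h₃ : 0 ≤ A₃) :
    specRad (hadamardGeomMean (A₁ᵀ * A₂ * A₃ᵀ * A₁ * A₂ᵀ * A₃)
        (A₂ᵀ * A₃ * A₁ᵀ * A₂ * A₃ᵀ * A₁) (A₃ᵀ * A₁ * A₂ᵀ * A₃ * A₁ᵀ * A₂)) ≤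
      specRad (A₁ * A₂ᵀ * A₃ * A₁ᵀ * A₂ * A₃ᵀ) := by
  have hρ₁ : specRad (A₁ᵀ * A₂ * A₃ᵀ * A₁ * A₂ᵀ * A₃) =
      specRad (A₁ * A₂ᵀ * A₃ * A₁ᵀ * A₂ * A₃ᵀ) := by
    simpa only [mul_assoc] using specRad_mul_comm (A₁ᵀ * A₂ * A₃ᵀ) (A₁ * A₂ᵀ * A₃)
  have hρ₂ : specRad (A₂ᵀ * A₃ * A₁ᵀ * A₂ * A₃ᵀ * A₁) =
      specRad (A₁ * A₂ᵀ * A₃ * A₁ᵀ * A₂ * A₃ᵀ) := by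
    simpa only [mul_assoc] using specRad_mul_comm (A₂ᵀ * A₃ * A₁ᵀ * A₂ * A₃ᵀ) A₁
  have hρ₃ : specRad (A₃ᵀ * A₁ * A₂ᵀ * A₃ * A₁ᵀ * A₂) =
      specRad (A₁ * A₂ᵀ * A₃ * A₁ᵀ * A₂ * A₃ᵀ) := by
    simpa only [mul_assoc] using specRad_mul_comm A₃ᵀ (A₁ * A₂ᵀ * A₃ * A₁ᵀ * A₂)
  calc _ ≤ specRad (A₁ᵀ * A₂ * A₃ᵀ * A₁ * A₂ᵀ * A₃) ^ (1 / 3 : ℝ) *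
        specRad (A₂ᵀ * A₃ * A₁ᵀ * A₂ * A₃ᵀ * A₁) ^ (1 / 3 : ℝ) *
        specRad (A₃ᵀ * A₁ * A₂ᵀ * A₃ * A₁ᵀ * A₂) ^ (1 / 3 : ℝ) :=
      specRad_hadamardGeomMean_le (by apply_rules [mul_nonneg, transpose_nonneg])
        (by apply_rules [mul_nonneg, transpose_nonneg])
        (by apply_rules [mul_nonneg, transpose_nonneg])
    _ = _ := by
      rw [hρ₁, hρ₂, hρ₃, ← Real.rpow_add' (specRad_nonneg _) (by norm_num),
        ← Real.rpow_add' (specRad_nonneg _) (by norm_num)]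
      norm_num

end CyclicProducts

end SpectralRadius

theorem stmt17 {N : Type*} [Fintype N] [DecidableEq N] (A₁ A₂ A₃ : Matrix N N ℝ)
    (h1 : ∀ i j, 0 ≤ A₁ i j) (h2 : ∀ i j, 0 ≤ A₂ i j) (h3 : ∀ i j, 0 ≤ A₃ i j) :
    l2OpNorm (hadPow A₁ (1/3) ⊙ hadPow A₂ (1/3) ⊙ hadPow A₃ (1/3)) ≤
        specRad (hadPow (A₁ᵀ * A₂ * A₃ᵀ * A₁ * A₂ᵀ * A₃) (1/3) ⊙
            hadPow (A₂ᵀ * A₃ * A₁ᵀ * A₂ * A₃ᵀ * A₁) (1/3) ⊙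
            hadPow (A₃ᵀ * A₁ * A₂ᵀ * A₃ * A₁ᵀ * A₂) (1/3)) ^ ((1 : ℝ) / 6) ∧
      specRad (hadPow (A₁ᵀ * A₂ * A₃ᵀ * A₁ * A₂ᵀ * A₃) (1/3) ⊙
            hadPow (A₂ᵀ * A₃ * A₁ᵀ * A₂ * A₃ᵀ * A₁) (1/3) ⊙
            hadPow (A₃ᵀ * A₁ * A₂ᵀ * A₃ * A₁ᵀ * A₂) (1/3)) ^ ((1 : ℝ) / 6) ≤
        specRad (A₁ * A₂ᵀ * A₃ * A₁ᵀ * A₂ * A₃ᵀ) ^ ((1 : ℝ) / 6) := by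
  refine ⟨?_, Real.rpow_le_rpow (specRad_nonneg _)
    (specRad_hadamardGeomMean_cyclic_le h1 h2 h3) (by norm_num)⟩
  rw [one_div (6 : ℝ), Real.le_rpow_inv_iff_of_pos (l2OpNorm_nonneg _) (specRad_nonneg _)
    (by norm_num)]
  exact_mod_cast l2OpNorm_hadamardGeomMean_pow_six_le h1 h2 h3
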